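/- arXiv:2502.09510 — 7 statements merged into one kernel-verified Lean document; each statement's English description precedes it below -/
import Mathlib

section
/- Let f : ℝ → ℂ be a Schwartz function that is even, i.e., f(−t) = f(t) for all t ∈ ℝ. Then Zf(1/2 + k, 1/2 + l) = 0 for all integers k, l. -/
/-!
At `x = 1/2 + k` the sample points `n - x` are permuted by the reflection `n ↦ 2k + 1 - n`, which
sends `n - x` to `-(n - x)`, and at `ω = 1/2 + l` the phase `e^{2πinω}` is `(-1)^n`, which changes
sign under this reflection because `2k + 1` is odd. Hence for even `f` the series defining
`Zf(x, ω)` equals its own negative.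
-/

/-- The Zak transform `Zf(x,ω) = ∑_{k∈ℤ} f(k−x) e^{2πikω}`. -/
noncomputable def zak (f : ℝ → ℂ) (x ω : ℝ) : ℂ :=
  ∑' k : ℤ, f ((k : ℝ) - x) * Complex.exp (2 * Real.pi * Complex.I * (k : ℂ) * (ω : ℂ))

open Complex

theorem tsum_eq_zero_of_comp_equiv_eq_neg {α G : Type*} [AddCommGroup G] [TopologicalSpace G]
    [IsTopologicalAddGroup G] [T2Space G] [IsAddTorsionFree G] (e : α ≃ α) {g : α → G}
    (hg : ∀ a, g (e a) = -g a) : ∑' a, g a = 0 :=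
  self_eq_neg.mp <| calc
    ∑' a, g a = ∑' a, g (e a) := (e.tsum_eq g).symm
    _ = -∑' a, g a := by rw [tsum_congr hg, tsum_neg]

theorem neg_one_zpow_two_mul_add_one_sub {R : Type*} [DivisionRing R] (a n : ℤ) :
    (-1 : R) ^ (2 * a + 1 - n) = -(-1) ^ n := by
  rcases Int.even_or_odd n with hn | hn
  · rw [hn.neg_one_zpow, ((odd_two_mul_add_one a).sub_even hn).neg_one_zpow]
  · rw [hn.neg_one_zpow, ((odd_two_mul_add_one a).sub_odd hn).neg_one_zpow, neg_neg]

theorem exp_two_pi_I_mul_int_mul_half_add_int (n l : ℤ) :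
    exp (2 * Real.pi * I * n * ((1 / 2 + l : ℝ) : ℂ)) = (-1) ^ n := by
  have h : 2 * Real.pi * I * n * ((1 / 2 + l : ℝ) : ℂ)
      = n * (Real.pi * I) + (n * l : ℤ) * (2 * Real.pi * I) := by
    push_cast
    ring
  rw [h, exp_add, exp_int_mul_two_pi_mul_I, mul_one, exp_int_mul, exp_pi_mul_I]

/-- If `f` is an even Schwartz function, then `Zf(1/2 + k, 1/2 + l) = 0` for all integers. -/
theorem zak_zero_of_even (f : SchwartzMap ℝ ℂ) (heven : ∀ t : ℝ, f (-t) = f t) (k l : ℤ) :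
    zak f (1 / 2 + (k : ℝ)) (1 / 2 + (l : ℝ)) = 0 := by
  unfold zak
  simp_rw [exp_two_pi_I_mul_int_mul_half_add_int]
  refine tsum_eq_zero_of_comp_equiv_eq_neg (Equiv.subLeft (2 * k + 1)) fun n => ?_
  have hreflect : ((2 * k + 1 - n : ℤ) : ℝ) - (1 / 2 + k) = -(n - (1 / 2 + k)) := by
    push_cast
    ring
  rw [Equiv.subLeft_apply, hreflect, heven, neg_one_zpow_two_mul_add_one_sub, mul_neg]
end

section
/- Let f : ℝ → ℂ be a Schwartz function that is odd, i.e., f(−t) = −f(t) for all t ∈ ℝ. Then Zf(k, l) = 0, Zf(1/2 + k, l) = 0, and Zf(k, 1/2 + l) = 0 for all integers k, l. -/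
open Complex
open scoped Real

theorem zak_neg_neg_of_odd {f : ℝ → ℂ} (hf : ∀ t, f (-t) = -f t) (x ω : ℝ) :
    zak f (-x) (-ω) = -zak f x ω := by
  rw [zak, zak, ← tsum_neg, ← (Equiv.neg ℤ).tsum_eq]
  refine tsum_congr fun k => ?_
  rw [Equiv.neg_apply, show ((-k : ℤ) : ℝ) - -x = -((k : ℝ) - x) by push_cast; ring, hf]
  push_cast
  ring_nf

theorem zak_add_int_right (f : ℝ → ℂ) (x ω : ℝ) (m : ℤ) :
    zak f x (ω + m) = zak f x ω := by
  refine tsum_congr fun k => ?_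
  rw [show 2 * π * I * k * ((ω + m : ℝ) : ℂ)
      = 2 * π * I * k * ω + ((k * m : ℤ) : ℂ) * (2 * π * I) by push_cast; ring,
    exp_add, exp_int_mul_two_pi_mul_I, mul_one]

theorem zak_add_int_left (f : ℝ → ℂ) (x ω : ℝ) (n : ℤ) :
    zak f (x + n) ω = cexp (2 * π * I * n * ω) * zak f x ω := by
  rw [zak, zak, ← (Equiv.addRight n).tsum_eq, ← tsum_mul_left]
  refine tsum_congr fun k => ?_
  rw [Equiv.coe_addRight, show ((k + n : ℤ) : ℝ) - (x + n) = (k : ℝ) - x by push_cast; ring,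
    show 2 * π * I * ((k + n : ℤ) : ℂ) * ω = 2 * π * I * n * ω + 2 * π * I * k * ω by
      push_cast; ring,
    exp_add]
  ring

theorem zak_half_half_eq_zero_of_odd {f : ℝ → ℂ} (hf : ∀ t, f (-t) = -f t) (a b : ℤ)
    (hab : Even (a * b)) : zak f (a / 2) (b / 2) = 0 := by
  obtain ⟨c, hc⟩ := hab
  have hfactor :
      2 * π * I * ((-a : ℤ) : ℂ) * ((b / 2 : ℝ) : ℂ) = ((-c : ℤ) : ℂ) * (2 * π * I) := by
    have hc' : (a : ℂ) * b = c + c := by exact_mod_cast hc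
    push_cast
    linear_combination (-π * I) * hc'
  have htranslate : zak f (-(a / 2)) (-(b / 2)) = zak f (a / 2) (b / 2) := by
    rw [show -(a / 2 : ℝ) = a / 2 + ((-a : ℤ) : ℝ) by push_cast; ring,
      show -(b / 2 : ℝ) = b / 2 + ((-b : ℤ) : ℝ) by push_cast; ring,
      zak_add_int_right, zak_add_int_left, hfactor, exp_int_mul_two_pi_mul_I, one_mul]
  rw [← CharZero.eq_neg_self_iff, ← zak_neg_neg_of_odd hf, htranslate]

/-- If `f` is an odd Schwartz function, then `Zf(k, l) = Zf(1/2 + k, l) = Zf(k, 1/2 + l) = 0`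
for all integers `k, l`. -/
theorem zak_zero_of_odd (f : SchwartzMap ℝ ℂ) (hodd : ∀ t : ℝ, f (-t) = -f t) (k l : ℤ) :
    zak f (k : ℝ) (l : ℝ) = 0 ∧
    zak f (1 / 2 + (k : ℝ)) (l : ℝ) = 0 ∧
    zak f (k : ℝ) (1 / 2 + (l : ℝ)) = 0 := by
  have hzero := zak_half_half_eq_zero_of_odd hodd
  refine ⟨?_, ?_, ?_⟩
  · simpa using hzero (2 * k) (2 * l) (by simp [mul_assoc])
  · convert hzero (2 * k + 1) (2 * l) (by simp [mul_left_comm]) using 2 <;> push_cast <;> ring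
  · convert hzero (2 * k) (2 * l + 1) (by simp [mul_assoc]) using 2 <;> push_cast <;> ring
end

section
/- Let g : ℝ → ℂ be a Schwartz function and let z_1, …, z_M ∈ [0,1)² be distinct points such that Zg(z_m) = 0 for every m = 1, …, M. Then the Gabor system 𝒢(g, Γ) with Γ = ⋃_{m=1}^M ((ℤ×ℤ) + z_m) is not a frame for L²(ℝ). -/
/-- Time-frequency shift: `(π(x,ω)g)(t) = e^{2πiωt} g(t−x)`. -/
noncomputable def tfShift (z : ℝ × ℝ) (g : ℝ → ℂ) : ℝ → ℂ :=
  fun t => Complex.exp (2 * Real.pi * Complex.I * (z.2 : ℂ) * (t : ℂ)) * g (t - z.1)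

/-- Gabor coefficient `⟨f, π(γ)g⟩ = ∫_ℝ f(t) conj((π(γ)g)(t)) dt`. -/
noncomputable def gaborCoef (g f : ℝ → ℂ) (γ : ℝ × ℝ) : ℂ :=
  ∫ t : ℝ, f t * (starRingEnd ℂ) (tfShift γ g t)

/-- `𝒢(g, Γ)` is a frame for `L²(ℝ)`: there exist `0 < A ≤ B < ∞` with
`A‖f‖² ≤ ∑_{γ∈Γ} |⟨f, π(γ)g⟩|² ≤ B‖f‖²` for all `f ∈ L²(ℝ)`. -/
def IsGaborFrame (g : ℝ → ℂ) (Γ : Set (ℝ × ℝ)) : Prop :=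
  ∃ A B : ℝ, 0 < A ∧ A ≤ B ∧
    ∀ f : ℝ → ℂ, MeasureTheory.MemLp f 2 MeasureTheory.volume →
      A * ∫ t : ℝ, ‖f t‖ ^ 2 ≤ ∑' γ : Γ, ‖gaborCoef g f γ‖ ^ 2 ∧
      ∑' γ : Γ, ‖gaborCoef g f γ‖ ^ 2 ≤ B * ∫ t : ℝ, ‖f t‖ ^ 2

/-- The shifted integer lattice `(ℤ×ℤ) + z ⊆ ℝ²`. -/
def intLatticeShift (z : ℝ × ℝ) : Set (ℝ × ℝ) :=
  Set.range fun kl : ℤ × ℤ => ((kl.1 : ℝ) + z.1, (kl.2 : ℝ) + z.2)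

/-- The unit square `[0,1)²`. -/
def unitSquare : Set (ℝ × ℝ) := Set.Ico (0 : ℝ) 1 ×ˢ Set.Ico (0 : ℝ) 1

/-!
On a coset `ℤ² + (x, ω)`, the Gabor coefficients of `f` at `(k + x, l + ω)`, `l ∈ ℤ`, are the
Fourier coefficients on `[0, 1]` of `s ↦ ∑_j f(s + j) conj(π(k + x, ω) g (s + j))`, so by Parseval
row `k` contributes an `L²[0, 1]` norm. Test against the comb `f = 1_{⋃_{|j| ≤ n} (j, j + δ]}`, with
`‖f‖² = (2n + 1) δ`. For `|k| ≤ n` the truncated periodization `∑_{|j| ≤ n}` differs from the full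
one, whose modulus is `|Zg(x - s, ω)| = O(δ)` near the zero `(x, ω)`, by a tail of `g`; for
`|k| > n` it is a tail alone. The tails are square summable in `k` uniformly in `n`, so each coset
contributes at most `δ (O(n δ²) + O(1))`, and `A (2n + 1) δ ≤ M δ (O(n δ²) + O(1))` fails for
small `δ` and large `n`.
-/

open MeasureTheory Set Function ComplexConjugate

namespace GaborZak

noncomputable def quarticWeight (p : ℤ) : ℝ := 1 / (1 + (p : ℝ) ^ 4)

lemma quarticWeight_nonneg (p : ℤ) : 0 ≤ quarticWeight p := by
  unfold quarticWeight; positivity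

lemma one_div_one_add_pow_four_le {t a : ℝ} (h : |t - a| ≤ 1) :
    1 / (1 + t ^ 4) ≤ 32 * (1 / (1 + a ^ 4)) := by
  rw [mul_one_div, div_le_div_iff₀ (by positivity) (by positivity)]
  have hsq : (t - a) ^ 2 ≤ 1 := by nlinarith [abs_le.mp h]
  have ha : a ^ 2 ≤ 2 * t ^ 2 + 2 * (t - a) ^ 2 := by nlinarith [sq_nonneg (t + (t - a))]
  have ha4 : a ^ 4 ≤ (2 * t ^ 2 + 2 * (t - a) ^ 2) ^ 2 := by
    simpa [← pow_mul] using pow_le_pow_left₀ (sq_nonneg a) ha 2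
  nlinarith [sq_nonneg (t ^ 2 - (t - a) ^ 2), sq_nonneg (t - a)]

lemma summable_one_div_one_add_sq : Summable fun p : ℤ => 1 / (1 + (p : ℝ) ^ 2) := by
  refine Summable.of_norm_bounded_eventually (Real.summable_one_div_int_pow.mpr one_lt_two) ?_
  filter_upwards [Filter.eventually_cofinite_ne 0] with p hp
  have : (0 : ℝ) < (p : ℝ) ^ 2 := by positivity
  rw [Real.norm_of_nonneg (by positivity)]
  exact one_div_le_one_div_of_le this (by linarith)

lemma quarticWeight_le_one_div_one_add_sq (p : ℤ) : quarticWeight p ≤ 1 / (1 + (p : ℝ) ^ 2) := by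
  refine one_div_le_one_div_of_le (by positivity) ?_
  rcases eq_or_ne p 0 with rfl | hp
  · simp
  · have h1 : (1 : ℝ) ≤ |(p : ℝ)| := by exact_mod_cast Int.one_le_abs hp
    have h2 : (1 : ℝ) ≤ (p : ℝ) ^ 2 := by nlinarith [sq_abs (p : ℝ)]
    nlinarith

lemma summable_quarticWeight : Summable quarticWeight :=
  summable_one_div_one_add_sq.of_nonneg_of_le quarticWeight_nonneg
    quarticWeight_le_one_div_one_add_sq

noncomputable def quarticTail (d : ℕ) : ℝ :=
  ∑' p : ℤ, {p : ℤ | (d : ℤ) ≤ |p|}.indicator quarticWeight p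

lemma quarticTail_nonneg (d : ℕ) : 0 ≤ quarticTail d :=
  tsum_nonneg fun _ => indicator_nonneg (fun p _ => quarticWeight_nonneg p) _

lemma quarticTail_le {d : ℕ} (hd : 1 ≤ d) :
    quarticTail d ≤ 2 * (∑' p : ℤ, 1 / (1 + (p : ℝ) ^ 2)) / (d : ℝ) ^ 2 := by
  have hd0 : (0 : ℝ) < d := by exact_mod_cast hd
  rw [mul_div_right_comm, ← tsum_mul_left]
  refine (summable_quarticWeight.indicator _).tsum_le_tsum (fun p => ?_)
    (summable_one_div_one_add_sq.mul_left _)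
  by_cases hp : p ∈ {p : ℤ | (d : ℤ) ≤ |p|}
  -- `d² (1 + p²) ≤ p² + p⁴ ≤ 2 (1 + p⁴)` when `d ≤ |p|`
  · rw [indicator_of_mem hp, quarticWeight, div_mul_div_comm, mul_one,
      div_le_div_iff₀ (by positivity) (by positivity)]
    have hdp : (d : ℝ) ^ 2 ≤ (p : ℝ) ^ 2 := by
      rw [← sq_abs (p : ℝ)]
      exact pow_le_pow_left₀ hd0.le (by exact_mod_cast hp.out) 2
    nlinarith [sq_nonneg ((p : ℝ) ^ 2 - 1)]
  · rw [indicator_of_notMem hp]; positivity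

lemma summable_quarticTail_succ_sq : Summable fun q : ℕ => quarticTail (q + 1) ^ 2 := by
  set S := ∑' p : ℤ, 1 / (1 + (p : ℝ) ^ 2)
  refine ((summable_nat_add_iff 1).mpr (Real.summable_one_div_nat_pow.mpr (by norm_num : 1 < 4))
    |>.mul_left ((2 * S) ^ 2)).of_nonneg_of_le (fun _ => sq_nonneg _) fun q => ?_
  calc quarticTail (q + 1) ^ 2 ≤ (2 * S / ((q + 1 : ℕ) : ℝ) ^ 2) ^ 2 :=
        pow_le_pow_left₀ (quarticTail_nonneg _) (quarticTail_le (by omega)) 2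
    _ = (2 * S) ^ 2 * (1 / ((q + 1 : ℕ) : ℝ) ^ 4) := by ring

lemma tsum_subtype_comp_sub_le_quarticTail {S : Set ℤ} {k : ℤ} {d : ℕ}
    (hS : ∀ j ∈ S, (d : ℤ) ≤ |j - k|) :
    ∑' j : S, quarticWeight (j - k) ≤ quarticTail d := by
  calc ∑' j : S, quarticWeight (j - k)
      = ∑' j : S, {p : ℤ | (d : ℤ) ≤ |p|}.indicator quarticWeight (j - k) :=
        tsum_congr fun j => (indicator_of_mem (s := {p : ℤ | (d : ℤ) ≤ |p|}) (hS j j.2) _).symm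
    _ ≤ quarticTail d :=
        tsum_comp_le_tsum_of_inj (summable_quarticWeight.indicator _)
          (indicator_nonneg fun p _ => quarticWeight_nonneg p)
          (fun i j h => Subtype.ext (sub_left_injective h))

noncomputable def blockBound (K ε : ℝ) (n q : ℕ) : ℝ :=
  if q ≤ n then ε + K * quarticTail (n + 1 - q) else K * quarticTail (q - n)

lemma norm_sum_Icc_le_blockBound {E : Type*} [NormedAddCommGroup E] [CompleteSpace E]
    {F : ℤ → E} {K ε : ℝ} {k : ℤ} (hK : 0 ≤ K) (hF : ∀ j, ‖F j‖ ≤ K * quarticWeight (j - k))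
    (hε : ‖∑' j, F j‖ ≤ ε) (n : ℕ) :
    ‖∑ j ∈ Finset.Icc (-n : ℤ) n, F j‖ ≤ blockBound K ε n k.natAbs := by
  have hW : Summable fun j : ℤ => K * quarticWeight (j - k) :=
    (summable_quarticWeight.comp_injective sub_left_injective).mul_left K
  have hFn : Summable fun j => ‖F j‖ := hW.of_nonneg_of_le (fun _ => norm_nonneg _) hF
  have tail : ∀ (S : Set ℤ) (d : ℕ), (∀ j ∈ S, (d : ℤ) ≤ |j - k|) →
      ∑' j : S, ‖F j‖ ≤ K * quarticTail d := fun S d hS =>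
    calc ∑' j : S, ‖F j‖ ≤ ∑' j : S, K * quarticWeight (j - k) :=
          (hFn.subtype S).tsum_le_tsum (fun j => hF j) (hW.subtype S)
      _ ≤ K * quarticTail d := by
          rw [tsum_mul_left]
          exact mul_le_mul_of_nonneg_left (tsum_subtype_comp_sub_le_quarticTail hS) hK
  unfold blockBound
  split_ifs with hk
  · have hsplit := hFn.of_norm.sum_add_tsum_subtype_compl (Finset.Icc (-n : ℤ) n)
    calc ‖∑ j ∈ Finset.Icc (-n : ℤ) n, F j‖
        = ‖∑' j, F j - ∑' j : {j // j ∉ Finset.Icc (-n : ℤ) n}, F j‖ := by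
          rw [← hsplit, add_sub_cancel_right]
      _ ≤ ε + K * quarticTail (n + 1 - k.natAbs) := by
          refine (norm_sub_le _ _).trans (add_le_add hε
            ((norm_tsum_le_tsum_norm (hFn.subtype _)).trans (tail _ _ fun j hj => ?_)))
          have hj' : j ∉ Finset.Icc (-n : ℤ) n := hj
          rw [Finset.mem_Icc] at hj'
          rw [Int.abs_eq_natAbs]
          omega
  · calc ‖∑ j ∈ Finset.Icc (-n : ℤ) n, F j‖ ≤ ∑ j ∈ Finset.Icc (-n : ℤ) n, ‖F j‖ := norm_sum_le _ _
      _ = ∑' j : (Finset.Icc (-n : ℤ) n : Set ℤ), ‖F j‖ := (Finset.tsum_subtype _ _).symm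
      _ ≤ K * quarticTail (k.natAbs - n) := tail _ _ fun j hj => by
          rw [Finset.coe_Icc, Set.mem_Icc] at hj
          rw [Int.abs_eq_natAbs]
          omega

lemma hasSum_comp_natAbs {G : Type*} [AddCommGroup G] [TopologicalSpace G]
    [IsTopologicalAddGroup G] {b : ℕ → G} {s : G} (hb : HasSum b s) :
    HasSum (fun k : ℤ => b k.natAbs) (s + s - b 0) :=
  HasSum.of_nat_of_neg (f := fun k : ℤ => b k.natAbs) (by simpa using hb) (by simpa using hb)

lemma summable_blockBound_sq (K ε : ℝ) (n : ℕ) : Summable fun q => blockBound K ε n q ^ 2 := by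
  refine (summable_nat_add_iff (n + 1)).mp ((summable_quarticTail_succ_sq.mul_left (K ^ 2)).congr
    fun q => ?_)
  rw [blockBound, if_neg (by omega), mul_pow, show q + (n + 1) - n = q + 1 by omega]

lemma tsum_blockBound_sq_le (K ε : ℝ) (n : ℕ) :
    ∑' q, blockBound K ε n q ^ 2 ≤
      2 * (n + 1) * ε ^ 2 + 3 * K ^ 2 * ∑' q : ℕ, quarticTail (q + 1) ^ 2 := by
  set Θ := ∑' q : ℕ, quarticTail (q + 1) ^ 2
  have hhead : ∑ q ∈ Finset.range (n + 1), blockBound K ε n q ^ 2 ≤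
      2 * (n + 1) * ε ^ 2 + 2 * K ^ 2 * Θ := by
    calc ∑ q ∈ Finset.range (n + 1), blockBound K ε n q ^ 2
        ≤ ∑ q ∈ Finset.range (n + 1), (2 * ε ^ 2 + 2 * K ^ 2 * quarticTail (n + 1 - q) ^ 2) := by
          refine Finset.sum_le_sum fun q hq => ?_
          rw [blockBound, if_pos (by simp at hq; omega)]
          nlinarith [add_sq_le (a := ε) (b := K * quarticTail (n + 1 - q))]
      _ = 2 * (n + 1) * ε ^ 2 +
            2 * K ^ 2 * ∑ q ∈ Finset.range (n + 1), quarticTail (q + 1) ^ 2 := by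
          have hrefl : ∑ q ∈ Finset.range (n + 1), quarticTail (n + 1 - q) ^ 2 =
              ∑ q ∈ Finset.range (n + 1), quarticTail (q + 1) ^ 2 := by
            rw [← Finset.sum_range_reflect (fun q => quarticTail (q + 1) ^ 2)]
            refine Finset.sum_congr rfl fun q hq => ?_
            rw [Finset.mem_range] at hq
            congr 2; omega
          rw [Finset.sum_add_distrib, ← Finset.mul_sum (s := Finset.range (n + 1)) (a := 2 * K ^ 2),
            hrefl, Finset.sum_const, Finset.card_range, nsmul_eq_mul]
          push_cast; ring
      _ ≤ 2 * (n + 1) * ε ^ 2 + 2 * K ^ 2 * Θ := by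
          gcongr
          exact summable_quarticTail_succ_sq.sum_le_tsum _ fun _ _ => sq_nonneg _
  have htail : ∑' q, blockBound K ε n (q + (n + 1)) ^ 2 = K ^ 2 * Θ := by
    rw [← tsum_mul_left]
    refine tsum_congr fun q => ?_
    rw [blockBound, if_neg (by omega), mul_pow, show q + (n + 1) - n = q + 1 by omega]
  rw [← (summable_blockBound_sq K ε n).sum_add_tsum_nat_add (n + 1), htail]
  linarith

lemma tsum_blockBound_natAbs_sq_le (K ε : ℝ) (n : ℕ) :
    ∑' k : ℤ, blockBound K ε n k.natAbs ^ 2 ≤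
      2 * (2 * (n + 1) * ε ^ 2 + 3 * K ^ 2 * ∑' q : ℕ, quarticTail (q + 1) ^ 2) := by
  rw [(hasSum_comp_natAbs (summable_blockBound_sq K ε n).hasSum).tsum_eq]
  linarith [sq_nonneg (blockBound K ε n 0), tsum_blockBound_sq_le K ε n]

lemma _root_.SchwartzMap.norm_iteratedDeriv_le_div_one_add_pow {F : Type*} [NormedAddCommGroup F]
    [NormedSpace ℝ F] (f : SchwartzMap ℝ F) (k n : ℕ) (x : ℝ) :
    ‖iteratedDeriv n f x‖ ≤
      (SchwartzMap.seminorm ℝ 0 n f + SchwartzMap.seminorm ℝ k n f) / (1 + |x| ^ k) := by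
  rw [le_div_iff₀ (by positivity), mul_one_add]
  have h0 := SchwartzMap.le_seminorm' ℝ 0 n f x
  rw [pow_zero, one_mul] at h0
  linarith [SchwartzMap.le_seminorm' ℝ k n f x]

lemma _root_.SchwartzMap.exists_norm_le_and_norm_deriv_le (g : SchwartzMap ℝ ℂ) :
    ∃ C, 0 ≤ C ∧ ∀ t : ℝ, ‖g t‖ ≤ C / (1 + t ^ 4) ∧ ‖deriv g t‖ ≤ C / (1 + t ^ 4) := by
  set C₀ := SchwartzMap.seminorm ℝ 0 0 g + SchwartzMap.seminorm ℝ 4 0 g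
  set C₁ := SchwartzMap.seminorm ℝ 0 1 g + SchwartzMap.seminorm ℝ 4 1 g
  refine ⟨C₀ + C₁, by positivity, fun t => ?_⟩
  have h4 : |t| ^ 4 = t ^ 4 := (Even.pow_abs ⟨2, rfl⟩ t)
  have h₀ := g.norm_iteratedDeriv_le_div_one_add_pow 4 0 t
  have h₁ := g.norm_iteratedDeriv_le_div_one_add_pow 4 1 t
  rw [iteratedDeriv_zero, h4] at h₀
  rw [iteratedDeriv_one, h4] at h₁
  constructor
  · exact h₀.trans (div_le_div_of_nonneg_right (le_add_of_nonneg_right (by positivity))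
      (by positivity))
  · exact h₁.trans (div_le_div_of_nonneg_right (le_add_of_nonneg_left (by positivity))
      (by positivity))

lemma norm_cexp_two_pi_I_mul (a b : ℝ) : ‖Complex.exp (2 * Real.pi * Complex.I * a * b)‖ = 1 := by
  rw [Complex.norm_exp]; simp

lemma norm_le_of_abs_sub_le {E : Type*} [SeminormedAddCommGroup E] {f : ℝ → E} {C : ℝ}
    (hC : 0 ≤ C) (hf : ∀ t, ‖f t‖ ≤ C / (1 + t ^ 4)) {t : ℝ} {p : ℤ} (h : |t - p| ≤ 1) :
    ‖f t‖ ≤ 32 * C * quarticWeight p := by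
  calc ‖f t‖ ≤ C * (1 / (1 + t ^ 4)) := by rw [mul_one_div]; exact hf t
    _ ≤ C * (32 * quarticWeight p) := mul_le_mul_of_nonneg_left (one_div_one_add_pow_four_le h) hC
    _ = 32 * C * quarticWeight p := by ring

lemma summable_zak_terms {g : ℝ → ℂ} {C : ℝ} (hC : 0 ≤ C) (hg : ∀ t, ‖g t‖ ≤ C / (1 + t ^ 4))
    {u : ℝ} (hu : |u| ≤ 1) (ω : ℝ) :
    Summable fun k : ℤ => g (k - u) * Complex.exp (2 * Real.pi * Complex.I * k * ω) := by
  refine Summable.of_norm_bounded (summable_quarticWeight.mul_left (32 * C)) fun k => ?_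
  rw [norm_mul, show (k : ℂ) = ((k : ℝ) : ℂ) by simp, norm_cexp_two_pi_I_mul, mul_one]
  exact norm_le_of_abs_sub_le hC hg (by rwa [sub_sub_cancel_left, abs_neg])

lemma norm_zak_sub_zak_le {g : ℝ → ℂ} {C : ℝ} (hdiff : Differentiable ℝ g) (hC : 0 ≤ C)
    (hg : ∀ t, ‖g t‖ ≤ C / (1 + t ^ 4)) (hg' : ∀ t, ‖deriv g t‖ ≤ C / (1 + t ^ 4))
    {u v : ℝ} (hu : |u| ≤ 1) (hv : |v| ≤ 1) (ω : ℝ) :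
    ‖zak g u ω - zak g v ω‖ ≤ 32 * C * (∑' p, quarticWeight p) * |u - v| := by
  have hterm : ∀ p : ℤ, ‖(g (p - u) - g (p - v)) * Complex.exp (2 * Real.pi * Complex.I * p * ω)‖
      ≤ 32 * C * quarticWeight p * |u - v| := by
    intro p
    rw [norm_mul, show (p : ℂ) = ((p : ℝ) : ℂ) by simp, norm_cexp_two_pi_I_mul, mul_one]
    have hmem : ∀ w : ℝ, |w| ≤ 1 → (p : ℝ) - w ∈ Icc ((p : ℝ) - 1) (p + 1) := fun w hw =>
      ⟨by linarith [(abs_le.mp hw).2], by linarith [(abs_le.mp hw).1]⟩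
    have hmvt := (convex_Icc ((p : ℝ) - 1) (p + 1)).norm_image_sub_le_of_norm_deriv_le
      (fun y _ => hdiff y) (fun y hy => norm_le_of_abs_sub_le hC hg' (abs_le.mpr
        ⟨by linarith [hy.1], by linarith [hy.2]⟩)) (hmem v hv) (hmem u hu)
    rwa [sub_sub_sub_cancel_left, Real.norm_eq_abs, abs_sub_comm] at hmvt
  have hbound : Summable fun p : ℤ => 32 * C * quarticWeight p * |u - v| :=
    (summable_quarticWeight.mul_left (32 * C)).mul_right _
  rw [zak, zak, ← (summable_zak_terms hC hg hu ω).tsum_sub (summable_zak_terms hC hg hv ω)]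
  simp_rw [← sub_mul]
  calc _ ≤ ∑' p : ℤ, 32 * C * quarticWeight p * |u - v| :=
        tsum_of_norm_bounded hbound.hasSum hterm
    _ = 32 * C * (∑' p, quarticWeight p) * |u - v| := by rw [tsum_mul_right, tsum_mul_left]

lemma tsum_tfShift_add_int (g : ℝ → ℂ) (x ω s : ℝ) (k : ℤ) :
    ∑' j : ℤ, tfShift (k + x, ω) g (s + j) =
      Complex.exp (2 * Real.pi * Complex.I * ω * (s + k)) * zak g (x - s) ω := by
  rw [zak, ← tsum_mul_left, ← (Equiv.addRight k).tsum_eq]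
  refine tsum_congr fun p => ?_
  simp only [tfShift, Equiv.coe_addRight, Int.cast_add, Complex.ofReal_add,
    Complex.ofReal_intCast]
  rw [show s + (p + k) - (k + x) = p - (x - s) by ring, mul_left_comm,
    ← Complex.exp_add, mul_comm (g _)]
  congr 2
  ring

lemma norm_tsum_conj_tfShift_add_int (g : ℝ → ℂ) (x ω s : ℝ) (k : ℤ) :
    ‖∑' j : ℤ, conj (tfShift (k + x, ω) g (s + j))‖ = ‖zak g (x - s) ω‖ := by
  rw [← Complex.conj_tsum, Complex.norm_conj, tsum_tfShift_add_int, norm_mul,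
    show (2 * Real.pi * Complex.I * ω * (s + k) : ℂ) =
      2 * Real.pi * Complex.I * ω * ((s + k : ℝ) : ℂ) by push_cast; ring, norm_cexp_two_pi_I_mul, one_mul]

noncomputable def periodizationBlock (g : ℝ → ℂ) (x ω : ℝ) (n : ℕ) (k : ℤ) (s : ℝ) : ℂ :=
  ∑ j ∈ Finset.Icc (-n : ℤ) n, conj (tfShift (k + x, ω) g (s + j))

lemma norm_periodizationBlock_le {g : ℝ → ℂ} {C : ℝ} (hdiff : Differentiable ℝ g) (hC : 0 ≤ C)
    (hg : ∀ t, ‖g t‖ ≤ C / (1 + t ^ 4)) (hg' : ∀ t, ‖deriv g t‖ ≤ C / (1 + t ^ 4))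
    {x ω : ℝ} (hx : x ∈ Icc 0 1) (hzero : zak g x ω = 0) {δ s : ℝ} (hδ : δ ≤ 1)
    (hs : s ∈ Icc 0 δ) (n : ℕ) (k : ℤ) :
    ‖periodizationBlock g x ω n k s‖ ≤
      blockBound (32 * C) (32 * C * (∑' p, quarticWeight p) * δ) n k.natAbs := by
  obtain ⟨hx0, hx1⟩ := hx
  obtain ⟨hs0, hsδ⟩ := hs
  refine norm_sum_Icc_le_blockBound (by positivity) (fun j => ?_) ?_ n
  · rw [Complex.norm_conj, tfShift, norm_mul, norm_cexp_two_pi_I_mul, one_mul]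
    refine norm_le_of_abs_sub_le hC hg (abs_le.mpr ⟨?_, ?_⟩) <;> push_cast <;> linarith
  -- the untruncated sum has modulus `‖Zg(x - s, ω) - Zg(x, ω)‖ = O(s)`
  · rw [norm_tsum_conj_tfShift_add_int, ← sub_zero (zak g (x - s) ω), ← hzero]
    refine (norm_zak_sub_zak_le hdiff hC hg hg' (abs_le.mpr ⟨by linarith, by linarith⟩)
      (abs_le.mpr ⟨by linarith, by linarith⟩) ω).trans ?_
    rw [sub_sub_cancel_left, abs_neg, abs_of_nonneg hs0]
    have : 0 ≤ ∑' p, quarticWeight p := tsum_nonneg quarticWeight_nonneg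
    gcongr

def combSet (n : ℕ) (δ : ℝ) : Set ℝ := ⋃ j ∈ Finset.Icc (-n : ℤ) n, Ioc (j : ℝ) (j + δ)

noncomputable def comb (n : ℕ) (δ : ℝ) : ℝ → ℂ := (combSet n δ).indicator 1

lemma measurableSet_combSet (n : ℕ) (δ : ℝ) : MeasurableSet (combSet n δ) :=
  Finset.measurableSet_biUnion _ fun _ _ => measurableSet_Ioc

lemma pairwiseDisjoint_Ioc_intCast_add {δ : ℝ} (hδ : δ ≤ 1) (s : Set ℤ) :
    s.PairwiseDisjoint fun j : ℤ => Ioc (j : ℝ) (j + δ) := by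
  refine ((pairwise_disjoint_Ioc_add_intCast (0 : ℝ)).mono fun i j h => ?_).set_pairwise s
  exact h.mono (Ioc_subset_Ioc (by simp) (by simpa)) (Ioc_subset_Ioc (by simp) (by simpa))

lemma volume_combSet (n : ℕ) {δ : ℝ} (hδ : δ ≤ 1) :
    volume (combSet n δ) = (2 * n + 1 : ℕ) * ENNReal.ofReal δ := by
  rw [combSet, measure_biUnion_finset (pairwiseDisjoint_Ioc_intCast_add hδ _)
    fun _ _ => measurableSet_Ioc]
  simp only [Real.volume_Ioc, add_sub_cancel_left, Finset.sum_const, Int.card_Icc, nsmul_eq_mul]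
  congr 2
  omega

lemma integral_norm_comb_sq (n : ℕ) {δ : ℝ} (hδ0 : 0 ≤ δ) (hδ1 : δ ≤ 1) :
    ∫ t, ‖comb n δ t‖ ^ 2 = (2 * n + 1) * δ := by
  have h : (fun t => ‖comb n δ t‖ ^ 2) = (combSet n δ).indicator 1 := by
    ext t
    by_cases ht : t ∈ combSet n δ <;> simp [comb, ht]
  rw [h, integral_indicator_one (measurableSet_combSet n δ), measureReal_def,
    volume_combSet n hδ1, ENNReal.toReal_mul, ENNReal.toReal_ofReal hδ0, ENNReal.toReal_natCast]
  push_cast; ring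

lemma memLp_comb (n : ℕ) {δ : ℝ} (hδ : δ ≤ 1) : MemLp (comb n δ) 2 volume :=
  memLp_indicator_const 2 (measurableSet_combSet n δ) 1 (Or.inr (by
    rw [volume_combSet n hδ]
    exact ENNReal.mul_ne_top (ENNReal.natCast_ne_top _) ENNReal.ofReal_ne_top))

lemma integral_comb_mul {ψ : ℝ → ℂ} (hψ : Continuous ψ) (n : ℕ) {δ : ℝ} (hδ0 : 0 ≤ δ)
    (hδ1 : δ ≤ 1) :
    ∫ t, comb n δ t * ψ t = ∫ s in 0..δ, ∑ j ∈ Finset.Icc (-n : ℤ) n, ψ (s + j) := by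
  have h : (fun t => comb n δ t * ψ t) = (combSet n δ).indicator ψ := by
    ext t
    by_cases ht : t ∈ combSet n δ <;> simp [comb, ht]
  rw [h, integral_indicator (measurableSet_combSet n δ), combSet,
    integral_biUnion_finset _ (fun _ _ => measurableSet_Ioc)
      (pairwiseDisjoint_Ioc_intCast_add hδ1 _) fun _ _ => hψ.integrableOn_Ioc,
    intervalIntegral.integral_finsetSum (f := fun (j : ℤ) (s : ℝ) => ψ (s + j)) fun j _ =>
      (hψ.comp (continuous_add_const (j : ℝ))).intervalIntegrable _ _]
  refine Finset.sum_congr rfl fun j _ => ?_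
  rw [← intervalIntegral.integral_of_le (by linarith), intervalIntegral.integral_comp_add_right ψ,
    zero_add, add_comm]

lemma continuous_conj_tfShift {g : ℝ → ℂ} (hg : Continuous g) (γ : ℝ × ℝ) :
    Continuous fun t => conj (tfShift γ g t) := by
  unfold tfShift
  fun_prop

lemma conj_tfShift_intCast_add (g : ℝ → ℂ) (a ω s : ℝ) (l j : ℤ) :
    conj (tfShift (a, l + ω) g (s + j)) =
      Complex.exp (-(2 * Real.pi * Complex.I * l * s)) * conj (tfShift (a, ω) g (s + j)) := by
  simp only [tfShift, map_mul, ← mul_assoc, ← Complex.exp_conj, ← Complex.exp_add]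
  congr 1
  refine Complex.exp_eq_exp_iff_exists_int.mpr ⟨-(l * j), ?_⟩
  simp only [map_ofNat, Complex.conj_ofReal, Complex.conj_I]
  push_cast
  ring

lemma fourierCoeffOn_indicator_Iic (P : ℝ → ℂ) {δ : ℝ} (hδ0 : 0 ≤ δ) (hδ1 : δ ≤ 1) (l : ℤ) :
    fourierCoeffOn zero_lt_one ((Iic δ).indicator P) l =
      ∫ s in 0..δ, Complex.exp (-(2 * Real.pi * Complex.I * l * s)) * P s := by
  rw [fourierCoeffOn_eq_integral, sub_zero, div_one, one_smul,
    ← intervalIntegral.integral_indicator ⟨hδ0, hδ1⟩]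
  refine intervalIntegral.integral_congr fun s _ => ?_
  by_cases hs : s ≤ δ
  · rw [indicator_of_mem (show s ∈ {x | x ≤ δ} from hs), indicator_of_mem (show s ∈ Iic δ from hs),
      fourier_coe_apply, smul_eq_mul]
    congr 2
    push_cast
    ring
  · rw [indicator_of_notMem (show s ∉ {x | x ≤ δ} from hs),
      indicator_of_notMem (show s ∉ Iic δ from hs), smul_zero]

-- `fourierCoeffOn` only sees `Ioc 0 1`, where `(Iic δ).indicator` cuts down to `(0, δ]`.
lemma gaborCoef_comb_eq_fourierCoeffOn {g : ℝ → ℂ} (hg : Continuous g) (n : ℕ) {δ : ℝ}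
    (hδ0 : 0 ≤ δ) (hδ1 : δ ≤ 1) (x ω : ℝ) (k l : ℤ) :
    gaborCoef g (comb n δ) (k + x, l + ω) =
      fourierCoeffOn zero_lt_one ((Iic δ).indicator (periodizationBlock g x ω n k)) l := by
  rw [gaborCoef, integral_comb_mul (continuous_conj_tfShift hg _) n hδ0 hδ1,
    fourierCoeffOn_indicator_Iic _ hδ0 hδ1]
  refine intervalIntegral.integral_congr fun s _ => ?_
  simp only [periodizationBlock, Finset.mul_sum, conj_tfShift_intCast_add]

lemma continuous_periodizationBlock {g : ℝ → ℂ} (hg : Continuous g) (x ω : ℝ) (n : ℕ) (k : ℤ) :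
    Continuous (periodizationBlock g x ω n k) :=
  continuous_finsetSum _ fun j _ =>
    (continuous_conj_tfShift hg _).comp (continuous_add_const (j : ℝ))

lemma hasSum_sq_gaborCoef_comb {g : ℝ → ℂ} (hg : Continuous g) (n : ℕ) {δ : ℝ} (hδ0 : 0 ≤ δ)
    (hδ1 : δ ≤ 1) (x ω : ℝ) (k : ℤ) {B : ℝ}
    (hB : ∀ s ∈ Icc 0 δ, ‖periodizationBlock g x ω n k s‖ ≤ B) :
    HasSum (fun l : ℤ => ‖gaborCoef g (comb n δ) (k + x, l + ω)‖ ^ 2)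
      (∫ s in 0..δ, ‖periodizationBlock g x ω n k s‖ ^ 2) := by
  set P := periodizationBlock g x ω n k
  have hB0 : 0 ≤ B := (norm_nonneg _).trans (hB 0 ⟨le_rfl, hδ0⟩)
  have hL2 : MemLp ((Iic δ).indicator P) 2 (volume.restrict (Ioc 0 1)) := by
    refine MemLp.of_bound ((continuous_periodizationBlock hg x ω n k).measurable.indicator
      measurableSet_Iic).aestronglyMeasurable B (ae_restrict_of_forall_mem measurableSet_Ioc
        fun s hs => ?_)
    by_cases hsδ : s ∈ Iic δ
    · rw [indicator_of_mem hsδ]; exact hB s ⟨hs.1.le, hsδ⟩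
    · rw [indicator_of_notMem hsδ, norm_zero]; exact hB0
  have h := hasSum_sq_fourierCoeffOn zero_lt_one hL2
  convert h using 1
  · ext l
    rw [gaborCoef_comb_eq_fourierCoeffOn hg n hδ0 hδ1]
  rw [sub_zero, inv_one, one_smul, ← intervalIntegral.integral_indicator ⟨hδ0, hδ1⟩]
  refine intervalIntegral.integral_congr fun s _ => ?_
  by_cases hs : s ≤ δ
  · rw [indicator_of_mem (show s ∈ {x | x ≤ δ} from hs), indicator_of_mem (show s ∈ Iic δ from hs)]
  · rw [indicator_of_notMem (show s ∉ {x | x ≤ δ} from hs),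
      indicator_of_notMem (show s ∉ Iic δ from hs), norm_zero, zero_pow two_ne_zero]

lemma tsum_ofReal_le_of_hasSum {ι : Type*} {f : ι → ℝ} {a b : ℝ} (hf : ∀ i, 0 ≤ f i)
    (h : HasSum f a) (hab : a ≤ b) : ∑' i, ENNReal.ofReal (f i) ≤ ENNReal.ofReal b := by
  rw [← ENNReal.ofReal_tsum_of_nonneg hf h.summable, h.tsum_eq]
  exact ENNReal.ofReal_le_ofReal hab

lemma tsum_le_of_tsum_ofReal_le {ι : Type*} {f : ι → ℝ} {b : ℝ} (hf : ∀ i, 0 ≤ f i) (hb : 0 ≤ b)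
    (h : ∑' i, ENNReal.ofReal (f i) ≤ ENNReal.ofReal b) : ∑' i, f i ≤ b :=
  calc ∑' i, f i = ∑' i, (ENNReal.ofReal (f i)).toReal :=
        tsum_congr fun i => (ENNReal.toReal_ofReal (hf i)).symm
    _ = (∑' i, ENNReal.ofReal (f i)).toReal :=
        (ENNReal.tsum_toReal_eq fun _ => ENNReal.ofReal_ne_top).symm
    _ ≤ b := ENNReal.toReal_le_of_le_ofReal hb h

lemma tsum_intLatticeShift_gaborCoef_comb_le {g : ℝ → ℂ} {C : ℝ} (hdiff : Differentiable ℝ g)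
    (hC : 0 ≤ C) (hg : ∀ t, ‖g t‖ ≤ C / (1 + t ^ 4)) (hg' : ∀ t, ‖deriv g t‖ ≤ C / (1 + t ^ 4))
    {z : ℝ × ℝ} (hz : z.1 ∈ Icc 0 1) (hzero : zak g z.1 z.2 = 0) (n : ℕ) {δ : ℝ}
    (hδ0 : 0 ≤ δ) (hδ1 : δ ≤ 1) :
    ∑' γ : intLatticeShift z, ENNReal.ofReal (‖gaborCoef g (comb n δ) γ‖ ^ 2) ≤
      ENNReal.ofReal (δ * ∑' k : ℤ,
        blockBound (32 * C) (32 * C * (∑' p, quarticWeight p) * δ) n k.natAbs ^ 2) := by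
  set β := fun k : ℤ => blockBound (32 * C) (32 * C * (∑' p, quarticWeight p) * δ) n k.natAbs
  have hβ : Summable fun k => δ * β k ^ 2 :=
    ((hasSum_comp_natAbs (summable_blockBound_sq _ _ n).hasSum).summable).mul_left δ
  have hinj : Injective fun kl : ℤ × ℤ => ((kl.1 : ℝ) + z.1, (kl.2 : ℝ) + z.2) :=
    fun a b h => by
      simp only [Prod.mk.injEq, add_left_inj, Int.cast_inj] at h
      exact Prod.ext h.1 h.2
  rw [intLatticeShift, tsum_range (fun γ => ENNReal.ofReal (‖gaborCoef g (comb n δ) γ‖ ^ 2)) hinj,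
    ENNReal.tsum_prod', ← tsum_mul_left]
  refine (ENNReal.tsum_le_tsum fun k => ?_).trans
    (tsum_ofReal_le_of_hasSum (fun k => by positivity) hβ.hasSum le_rfl)
  have hB : ∀ s ∈ Icc 0 δ, ‖periodizationBlock g z.1 z.2 n k s‖ ≤ β k := fun s hs =>
    norm_periodizationBlock_le hdiff hC hg hg' hz hzero hδ1 hs n k
  refine tsum_ofReal_le_of_hasSum (fun _ => sq_nonneg _)
    (hasSum_sq_gaborCoef_comb hdiff.continuous n hδ0 hδ1 z.1 z.2 k hB) ?_
  calc ∫ s in 0..δ, ‖periodizationBlock g z.1 z.2 n k s‖ ^ 2 ≤ ∫ _ in 0..δ, β k ^ 2 :=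
        intervalIntegral.integral_mono_on hδ0
          (((continuous_periodizationBlock hdiff.continuous _ _ n k).norm.pow 2).intervalIntegrable
            _ _) intervalIntegrable_const
          fun s hs => pow_le_pow_left₀ (norm_nonneg _) (hB s hs) 2
    _ = δ * β k ^ 2 := by rw [intervalIntegral.integral_const, sub_zero, smul_eq_mul]

lemma tsum_iUnion_intLatticeShift_gaborCoef_comb_le {g : ℝ → ℂ} {C : ℝ}
    (hdiff : Differentiable ℝ g) (hC : 0 ≤ C) (hg : ∀ t, ‖g t‖ ≤ C / (1 + t ^ 4))
    (hg' : ∀ t, ‖deriv g t‖ ≤ C / (1 + t ^ 4)) {ι : Type*} [Fintype ι] {z : ι → ℝ × ℝ}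
    (hz : ∀ m, (z m).1 ∈ Icc 0 1) (hzero : ∀ m, zak g (z m).1 (z m).2 = 0) (n : ℕ) {δ : ℝ}
    (hδ0 : 0 ≤ δ) (hδ1 : δ ≤ 1) :
    ∑' γ : ⋃ m, intLatticeShift (z m), ‖gaborCoef g (comb n δ) γ‖ ^ 2 ≤
      Fintype.card ι * (δ * (2 * (2 * (n + 1) * (32 * C * (∑' p, quarticWeight p) * δ) ^ 2 +
        3 * (32 * C) ^ 2 * ∑' q : ℕ, quarticTail (q + 1) ^ 2))) := by
  refine tsum_le_of_tsum_ofReal_le (fun _ => sq_nonneg _)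
    (mul_nonneg (Nat.cast_nonneg _) (mul_nonneg hδ0 (by positivity))) ?_
  calc _ ≤ ∑ m, ∑' γ : intLatticeShift (z m), ENNReal.ofReal (‖gaborCoef g (comb n δ) γ‖ ^ 2) :=
        ENNReal.tsum_iUnion_le (fun γ => ENNReal.ofReal (‖gaborCoef g (comb n δ) γ‖ ^ 2))
          fun m => intLatticeShift (z m)
    _ ≤ ∑ _m : ι, ENNReal.ofReal (δ * (2 * (2 * (n + 1) *
          (32 * C * (∑' p, quarticWeight p) * δ) ^ 2 +
          3 * (32 * C) ^ 2 * ∑' q : ℕ, quarticTail (q + 1) ^ 2))) :=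
        Finset.sum_le_sum fun m _ =>
          (tsum_intLatticeShift_gaborCoef_comb_le hdiff hC hg hg' (hz m) (hzero m) n hδ0 hδ1).trans
            (ENNReal.ofReal_le_ofReal (mul_le_mul_of_nonneg_left
              (tsum_blockBound_natAbs_sq_le _ _ n) hδ0))
    _ = _ := by
        rw [Finset.sum_const, Finset.card_univ, nsmul_eq_mul, ← ENNReal.ofReal_natCast,
          ← ENNReal.ofReal_mul (Nat.cast_nonneg _)]

lemma exists_pos_nat_mul_sq_add_lt {A : ℝ} (hA : 0 < A) {c : ℝ} (hc : 0 ≤ c) (b : ℝ) :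
    ∃ δ : ℝ, 0 < δ ∧ δ ≤ 1 ∧ ∃ n : ℕ, c * (n + 1) * δ ^ 2 + b < A * (2 * n + 1) := by
  set δ := min 1 (A / (c + 1))
  have hδ0 : 0 < δ := lt_min one_pos (by positivity)
  have hδ1 : δ ≤ 1 := min_le_left _ _
  have hcδ : c * δ ^ 2 ≤ A := by
    have hδA : δ * (c + 1) ≤ A := (le_div_iff₀ (by positivity)).mp (min_le_right _ _)
    nlinarith
  obtain ⟨n, hn⟩ := exists_nat_gt (b / A)
  refine ⟨δ, hδ0, hδ1, n, ?_⟩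
  have hbn : b < A * n := by rwa [div_lt_iff₀ hA, mul_comm] at hn
  nlinarith [n.cast_nonneg (α := ℝ)]

end GaborZak

open GaborZak

theorem gabor_not_frame_of_zak_zeros_general (g : SchwartzMap ℝ ℂ) (M : ℕ)
    (z : Fin M → ℝ × ℝ) (hz' : ∀ m, z m ∈ unitSquare)
    (hzero : ∀ m, zak (⇑g) ((z m).1) ((z m).2) = 0) :
    ¬ IsGaborFrame (⇑g) (⋃ m, intLatticeShift (z m)) := by
  rintro ⟨A, _, hA, -, hframe⟩
  obtain ⟨C, hC, hdecay⟩ := g.exists_norm_le_and_norm_deriv_le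
  set L := 32 * C * ∑' p, quarticWeight p
  set Θ := ∑' q : ℕ, quarticTail (q + 1) ^ 2
  have hL : 0 ≤ L := mul_nonneg (by positivity) (tsum_nonneg quarticWeight_nonneg)
  have hΘ : 0 ≤ Θ := tsum_nonneg fun _ => sq_nonneg _
  obtain ⟨δ, hδ0, hδ1, n, hlt⟩ :=
    exists_pos_nat_mul_sq_add_lt hA (c := 4 * M * L ^ 2) (by positivity) (6 * M * (32 * C) ^ 2 * Θ)
  have hlow := (hframe (comb n δ) (memLp_comb n hδ1)).1
  rw [integral_norm_comb_sq n hδ0.le hδ1] at hlow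
  have hup := tsum_iUnion_intLatticeShift_gaborCoef_comb_le g.differentiable hC
    (fun t => (hdecay t).1) (fun t => (hdecay t).2) (fun m => ⟨(hz' m).1.1, (hz' m).1.2.le⟩)
    hzero n hδ0.le hδ1
  rw [Fintype.card_fin] at hup
  nlinarith [mul_lt_mul_of_pos_left hlt hδ0]

/-- If `z_1, …, z_M ∈ [0,1)²` are distinct zeros of the Zak transform of a Schwartz window `g`,
then the Gabor system over `Γ = ⋃_m ((ℤ×ℤ) + z_m)` is not a frame for `L²(ℝ)`. -/
theorem gabor_not_frame_of_zak_zeros (g : SchwartzMap ℝ ℂ) (M : ℕ) (hM : 1 ≤ M)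
    (z : Fin M → ℝ × ℝ) (hz : Function.Injective z) (hz' : ∀ m, z m ∈ unitSquare)
    (hzero : ∀ m, zak (⇑g) ((z m).1) ((z m).2) = 0) :
    ¬ IsGaborFrame (⇑g) (⋃ m, intLatticeShift (z m)) :=
  gabor_not_frame_of_zak_zeros_general g M z hz' hzero
end

section
/- For every x ∈ ℝ, ∑_{k∈ℤ} (8π(k−x)² − 1)·e^{−2π(k−x)²} = 2^{−1/2} · ∑_{k∈ℤ} (1 − 2πk²)·e^{−πk²/2}·cos(2πkx), where both series converge absolutely. (The left-hand side is the Zak transform Z(𝒟_{√2}^{−1} h_2)(x, 0) of the dilated second Hermite function g(t) = (8πt² − 1)e^{−2πt²}.) -/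
/-!
Poisson summation `∑ₙ g(n - x) = ∑ₙ 𝓕g(n) e^{-2πinx}` applies to `g(t) = (8πt² - 1)e^{-2πt²}`,
since both `g` and `𝓕g` decay like `|t|⁻²`. With `γ(t) = e^{-2πt²}` one has `g = γ''/(2π) + γ`, so
`𝓕γ(ξ) = 2^{-1/2} e^{-πξ²/2}` and `𝓕(γ'')(ξ) = (2πiξ)² 𝓕γ(ξ)` give
`𝓕g(ξ) = 2^{-1/2} (1 - 2πξ²) e^{-πξ²/2}`. This is real, so taking real parts turns the Fourier
side into the cosine series.
-/

open Real Complex MeasureTheory Filter Asymptotics FourierTransform Topology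

lemma isLittleO_pow_mul_exp_neg_mul_sq_cocompact {a : ℝ} (ha : 0 < a) (n : ℕ) (s : ℝ) :
    (fun t : ℝ => t ^ n * rexp (-a * t ^ 2)) =o[cocompact ℝ] (|·| ^ s) := by
  have hne : ∀ᶠ t : ℝ in cocompact ℝ, 0 < |t| := by
    filter_upwards [(isCompact_singleton (x := (0 : ℝ))).compl_mem_cocompact] with t ht
    exact abs_pos.mpr ht
  refine isLittleO_iff_exists_eq_mul.mpr
    ⟨fun t => t ^ n * |t| ^ (-s) * rexp (-a * t ^ 2), ?_, ?_⟩
  · rw [tendsto_zero_iff_norm_tendsto_zero]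
    refine (tendsto_rpow_abs_mul_exp_neg_mul_sq_cocompact ha (n - s)).congr' ?_
    filter_upwards [hne] with t ht
    rw [norm_mul, norm_mul, norm_pow, Real.norm_eq_abs, Real.norm_eq_abs, Real.norm_eq_abs,
      abs_of_pos (rpow_pos_of_pos ht _), abs_of_pos (exp_pos _), rpow_sub ht, rpow_neg ht.le,
      rpow_natCast, div_eq_mul_inv]
  · filter_upwards [hne] with t ht
    simp only [Pi.mul_apply]
    rw [mul_right_comm, mul_assoc (t ^ n), ← rpow_add ht, neg_add_cancel, rpow_zero, mul_one]

lemma isBigO_quadratic_mul_exp_neg_mul_sq_cocompact {a : ℝ} (ha : 0 < a) (b c s : ℝ) :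
    (fun t : ℝ => (b * t ^ 2 + c) * rexp (-a * t ^ 2)) =O[cocompact ℝ] (|·| ^ s) :=
  (((isLittleO_pow_mul_exp_neg_mul_sq_cocompact ha 2 s).isBigO.const_mul_left b).add
    ((isLittleO_pow_mul_exp_neg_mul_sq_cocompact ha 0 s).isBigO.const_mul_left c)).congr_left
    fun t => by ring

lemma summable_norm_int_add_of_isBigO_rpow {E : Type*} [NormedAddCommGroup E] {f : ℝ → E} {b : ℝ}
    (hb : 1 < b) (hf : f =O[cocompact ℝ] (|·| ^ (-b))) (a : ℝ) :
    Summable fun n : ℤ => ‖f (n + a)‖ := by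
  have hshift : Tendsto (fun n : ℤ => (n : ℝ) + a) cofinite (cocompact ℝ) :=
    (Homeomorph.addRight a).isClosedEmbedding.tendsto_cocompact.comp Int.tendsto_coe_cofinite
  refine summable_of_isBigO ((Real.summable_one_div_int_add_rpow a b).mpr hb) ?_
  simpa [Function.comp_def, Real.rpow_neg (abs_nonneg _)] using (hf.comp_tendsto hshift).norm_left

lemma Real.tsum_sub_eq_tsum_mul_cos_of_rpow_decay {f F : ℝ → ℝ} (hc : Continuous f) {b : ℝ}
    (hb : 1 < b) (hf : f =O[cocompact ℝ] (|·| ^ (-b))) (hF : F =O[cocompact ℝ] (|·| ^ (-b)))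
    (hfF : ∀ ξ, 𝓕 (fun t => (f t : ℂ)) ξ = F ξ) (x : ℝ) :
    ∑' n : ℤ, f (n - x) = ∑' n : ℤ, F n * cos (2 * π * n * x) := by
  have hFf : 𝓕 (fun t => (f t : ℂ)) = fun ξ => (F ξ : ℂ) := funext hfF
  have hpoisson := Real.tsum_eq_tsum_fourier_of_rpow_decay (f := fun t => (f t : ℂ))
    (by fun_prop) hb (isBigO_ofReal_left.mpr hf) (hFf ▸ isBigO_ofReal_left.mpr hF) (-x)
  rw [hFf] at hpoisson
  have hsum : Summable fun n : ℤ => (F n : ℂ) * fourier n ((-x : ℝ) : UnitAddCircle) := by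
    refine Summable.of_norm ?_
    simpa only [norm_mul, fourier_apply, Circle.norm_coe, mul_one, norm_real, add_zero,
      Int.cast_zero] using summable_norm_int_add_of_isBigO_rpow hb hF 0
  calc ∑' n : ℤ, f (n - x) = (∑' n : ℤ, (f (-x + n) : ℂ)).re := by
        rw [← ofReal_tsum, ofReal_re]
        simp_rw [neg_add_eq_sub]
    _ = ∑' n : ℤ, ((F n : ℂ) * fourier n ((-x : ℝ) : UnitAddCircle)).re := by
        rw [hpoisson, re_tsum hsum]
    _ = ∑' n : ℤ, F n * cos (2 * π * n * x) := by
        refine tsum_congr fun n => ?_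
        rw [fourier_coe_apply, re_ofReal_mul, ← cos_neg]
        congr 1
        convert exp_ofReal_mul_I_re (-(2 * π * n * x)) using 3
        push_cast
        ring

lemma integrable_pow_mul_exp_neg_mul_sq {b : ℝ} (hb : 0 < b) (n : ℕ) :
    Integrable fun x : ℝ => x ^ n * rexp (-b * x ^ 2) := by
  simpa [rpow_natCast] using
    integrable_rpow_mul_exp_neg_mul_sq hb (s := n) (by linarith [n.cast_nonneg (α := ℝ)])

lemma Real.fourier_const_mul_add {u v : ℝ → ℂ} (hu : Integrable u) (hv : Integrable v) (a : ℂ)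
    (ξ : ℝ) : 𝓕 (fun t => a * u t + v t) ξ = a * 𝓕 u ξ + 𝓕 v ξ := by
  -- `𝓕` on `ℝ → ℂ` is by definition `VectorFourier.fourierIntegral 𝐞 volume (innerₗ ℝ)`.
  have hadd := VectorFourier.fourierIntegral_add (μ := volume) (L := innerₗ ℝ)
    Real.continuous_fourierChar (innerSL ℝ).continuous₂ (hu.const_mul a) hv
  have hsmul := VectorFourier.fourierIntegral_const_smul 𝐞 volume (innerₗ ℝ) u a
  exact congrFun (hadd.trans (by rw [show (fun t => a * u t) = a • u from rfl, hsmul])) ξ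

lemma Real.fourier_secondDeriv_of_hasDerivAt {f f' f'' : ℝ → ℂ}
    (hf : ∀ t, HasDerivAt f (f' t) t) (hf' : ∀ t, HasDerivAt f' (f'' t) t)
    (hi : Integrable f) (hi' : Integrable f') (hi'' : Integrable f'') (ξ : ℝ) :
    𝓕 f'' ξ = (2 * π * I * ξ) ^ 2 * 𝓕 f ξ := by
  have hd : deriv f = f' := funext fun t => (hf t).deriv
  have hd' : deriv f' = f'' := funext fun t => (hf' t).deriv
  have h1 := Real.fourier_deriv hi (fun t => (hf t).differentiableAt) (hd ▸ hi')
  have h2 := Real.fourier_deriv hi' (fun t => (hf' t).differentiableAt) (hd' ▸ hi'')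
  rw [hd] at h1
  rw [hd'] at h2
  rw [h2, h1]
  simp only [smul_eq_mul]
  ring

lemma hasDerivAt_exp_neg_mul_sq (b t : ℝ) :
    HasDerivAt (fun t => rexp (-b * t ^ 2)) (-2 * b * t * rexp (-b * t ^ 2)) t := by
  convert ((hasDerivAt_pow 2 t).const_mul (-b)).exp using 1
  ring

lemma fourier_exp_neg_two_pi_mul_sq (ξ : ℝ) :
    𝓕 (fun t : ℝ => (rexp (-(2 * π) * t ^ 2) : ℂ)) ξ
      = ((2 ^ (-(1 : ℝ) / 2) * rexp (-π * ξ ^ 2 / 2) : ℝ) : ℂ) := by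
  have hsqrt : 1 / (2 : ℂ) ^ (1 / 2 : ℂ) = ((2 ^ (-(1 : ℝ) / 2) : ℝ) : ℂ) := by
    rw [neg_div, rpow_neg zero_le_two, ofReal_inv, ofReal_cpow zero_le_two, one_div]
    norm_num
  have hgauss : (fun t : ℝ => (rexp (-(2 * π) * t ^ 2) : ℂ))
      = fun t : ℝ => cexp (-π * 2 * t ^ 2) := by
    ext t
    push_cast
    ring_nf
  rw [hgauss, fourier_gaussian_pi (by norm_num), hsqrt]
  push_cast
  ring_nf

lemma fourier_dilated_hermite_two (ξ : ℝ) :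
    𝓕 (fun t : ℝ => (((8 * π * t ^ 2 - 1) * rexp (-2 * π * t ^ 2) : ℝ) : ℂ)) ξ
      = ((2 ^ (-(1 : ℝ) / 2) * ((1 - 2 * π * ξ ^ 2) * rexp (-π * ξ ^ 2 / 2)) : ℝ) : ℂ) := by
  set g : ℝ → ℝ := fun t => rexp (-(2 * π) * t ^ 2)
  have hg (t : ℝ) : HasDerivAt g (-4 * π * t * g t) t := by
    convert hasDerivAt_exp_neg_mul_sq (2 * π) t using 1; ring
  have hg' (t : ℝ) : HasDerivAt (fun t => -4 * π * t * g t)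
      ((16 * π ^ 2 * t ^ 2 - 4 * π) * g t) t :=
    (((hasDerivAt_id t).const_mul (-4 * π)).mul (hg t)).congr_deriv (by simp only [id]; ring)
  have hint (n : ℕ) : Integrable fun t => t ^ n * g t :=
    integrable_pow_mul_exp_neg_mul_sq (by positivity) n
  have hi : Integrable g := (hint 0).congr (.of_forall fun t => by simp)
  have hi' : Integrable fun t => -4 * π * t * g t :=
    ((hint 1).const_mul (-4 * π)).congr (.of_forall fun t => by simp only [pow_one]; ring)
  have hi'' : Integrable fun t => (16 * π ^ 2 * t ^ 2 - 4 * π) * g t :=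
    (((hint 2).const_mul (16 * π ^ 2)).sub (hi.const_mul (4 * π))).congr
      (.of_forall fun t => by simp only [Pi.sub_apply]; ring)
  have hci : Integrable fun t => (g t : ℂ) := hi.ofReal
  have hci'' : Integrable fun t => (((16 * π ^ 2 * t ^ 2 - 4 * π) * g t : ℝ) : ℂ) := hi''.ofReal
  have hπ : (π : ℂ) ≠ 0 := ofReal_ne_zero.mpr pi_ne_zero
  have hdecomp : (fun t : ℝ => (((8 * π * t ^ 2 - 1) * rexp (-2 * π * t ^ 2) : ℝ) : ℂ))
      = fun t => (2 * π : ℂ)⁻¹ * (((16 * π ^ 2 * t ^ 2 - 4 * π) * g t : ℝ) : ℂ) + (g t : ℂ) := by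
    ext t
    push_cast [g]
    field_simp
    ring
  have hsq : (2 * π * I * ξ) ^ 2 = ((-(4 * π ^ 2 * ξ ^ 2) : ℝ) : ℂ) := by
    push_cast
    linear_combination (4 * π ^ 2 * ξ ^ 2 : ℂ) * I_sq
  rw [hdecomp, Real.fourier_const_mul_add hci'' hci, Real.fourier_secondDeriv_of_hasDerivAt
    (fun t => (hg t).ofReal_comp) (fun t => (hg' t).ofReal_comp) hci hi'.ofReal hci'' ξ,
    fourier_exp_neg_two_pi_mul_sq, hsq]
  push_cast
  field_simp
  ring

/-- `∑_(k∈ℤ) (8π(k−x)² − 1) e^(−2π(k−x)²) = 2^(−1/2) ∑_(k∈ℤ) (1 − 2πk²) e^(−πk²/2) cos(2πkx)`,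
both series converging absolutely. The left-hand side is the Zak transform
`Z(𝒟_√2⁻¹ h₂)(x, 0)` of the dilated second Hermite function `g(t) = (8πt² − 1)e^(−2πt²)`. -/
theorem zak_dilated_h2_cosine_series (x : ℝ) :
    Summable (fun k : ℤ =>
      |(8 * Real.pi * ((k : ℝ) - x) ^ 2 - 1) * Real.exp (-2 * Real.pi * ((k : ℝ) - x) ^ 2)|) ∧
    Summable (fun k : ℤ =>
      |(1 - 2 * Real.pi * (k : ℝ) ^ 2) * Real.exp (-Real.pi * (k : ℝ) ^ 2 / 2) *
        Real.cos (2 * Real.pi * (k : ℝ) * x)|) ∧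
    ∑' k : ℤ, (8 * Real.pi * ((k : ℝ) - x) ^ 2 - 1) * Real.exp (-2 * Real.pi * ((k : ℝ) - x) ^ 2)
      = 2 ^ (-(1 : ℝ) / 2) *
        ∑' k : ℤ, (1 - 2 * Real.pi * (k : ℝ) ^ 2) * Real.exp (-Real.pi * (k : ℝ) ^ 2 / 2) *
          Real.cos (2 * Real.pi * (k : ℝ) * x) := by
  have hf : (fun t : ℝ => (8 * π * t ^ 2 - 1) * rexp (-2 * π * t ^ 2))
      =O[cocompact ℝ] (|·| ^ (-2 : ℝ)) :=
    (isBigO_quadratic_mul_exp_neg_mul_sq_cocompact (a := 2 * π) (by positivity) (8 * π) (-1) _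
      ).congr_left fun t => by ring_nf
  have hg : (fun ξ : ℝ => (1 - 2 * π * ξ ^ 2) * rexp (-π * ξ ^ 2 / 2))
      =O[cocompact ℝ] (|·| ^ (-2 : ℝ)) :=
    (isBigO_quadratic_mul_exp_neg_mul_sq_cocompact (a := π / 2) (by positivity) (-2 * π) 1 _
      ).congr_left fun t => by ring_nf
  have hg_sum := summable_norm_int_add_of_isBigO_rpow one_lt_two hg 0
  simp only [add_zero, Real.norm_eq_abs] at hg_sum
  refine ⟨?_, ?_, ?_⟩
  · simpa [sub_eq_add_neg] using summable_norm_int_add_of_isBigO_rpow one_lt_two hf (-x)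
  · refine hg_sum.of_nonneg_of_le (fun k => abs_nonneg _) fun k => ?_
    rw [abs_mul]
    exact mul_le_of_le_one_right (abs_nonneg _) (abs_cos_le_one _)
  · rw [Real.tsum_sub_eq_tsum_mul_cos_of_rpow_decay (by fun_prop) one_lt_two hf
      (hg.const_mul_left _) fourier_dilated_hermite_two x, ← tsum_mul_left]
    simp only [mul_assoc]
end

section
/- The series ∑_{k∈ℤ} (1 − 2πk²)·e^{−πk²/2} converges absolutely and its sum is strictly negative. -/
/-! The terms with `k ≠ 0` are nonpositive since `2πk² ≥ 2π > 1`, so the sum is at most the three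
central terms `1 + 2(1 - 2π)e^{-π/2}`, which is negative because `e^{π/2} < e² < 9 < 4π - 2`. -/

open Real

lemma summable_abs_pow_mul_exp_neg_mul_sq {a : ℝ} (ha : 0 < a) (n : ℕ) :
    Summable fun k : ℤ => |(k : ℝ)| ^ n * exp (-a * k ^ 2) := by
  convert summable_pow_mul_jacobiTheta₂_term_bound 0 (div_pos ha pi_pos) n using 3 with k
  · rw [Int.cast_abs]
  · congr 1
    field_simp
    ring

lemma summable_one_sub_mul_sq_mul_exp_neg_mul_sq (c : ℝ) {a : ℝ} (ha : 0 < a) :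
    Summable fun k : ℤ => (1 - c * k ^ 2) * exp (-a * k ^ 2) := by
  refine ((summable_abs_pow_mul_exp_neg_mul_sq ha 0).sub
    ((summable_abs_pow_mul_exp_neg_mul_sq ha 2).mul_left c)).congr fun k => ?_
  simp only [pow_zero, sq_abs]
  ring

section
variable {ι α : Type*} [AddCommGroup α] [PartialOrder α] [IsOrderedAddMonoid α]
  [TopologicalSpace α] [OrderClosedTopology α] [IsTopologicalAddGroup α] [T2Space α]

lemma Summable.tsum_le_sum_of_nonpos {f : ι → α} (hf : Summable f) (s : Finset ι)
    (hs : ∀ i ∉ s, f i ≤ 0) : ∑' i, f i ≤ ∑ i ∈ s, f i := by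
  simpa [tsum_neg] using hf.neg.sum_le_tsum s fun i hi => neg_nonneg.2 (hs i hi)

end

lemma exp_pi_div_two_lt : exp (π / 2) < 4 * π - 2 :=
  calc exp (π / 2) ≤ exp 1 ^ 2 := by
        rw [← exp_nat_mul]; exact exp_le_exp.2 (by linarith [pi_le_four])
    _ < 3 ^ 2 := by gcongr; exact exp_one_lt_three
    _ < 4 * π - 2 := by linarith [pi_gt_three]

/-- The series `∑_(k∈ℤ) (1 − 2πk²) e^(−πk²/2)` converges absolutely and its sum is strictly
negative. -/
theorem sum_neg :
    Summable (fun k : ℤ => |(1 - 2 * Real.pi * (k : ℝ) ^ 2) * Real.exp (-Real.pi * (k : ℝ) ^ 2 / 2)|) ∧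
    ∑' k : ℤ, (1 - 2 * Real.pi * (k : ℝ) ^ 2) * Real.exp (-Real.pi * (k : ℝ) ^ 2 / 2) < 0 := by
  set f : ℤ → ℝ := fun k => (1 - 2 * π * k ^ 2) * exp (-π * k ^ 2 / 2)
  have hf : Summable f :=
    (summable_one_sub_mul_sq_mul_exp_neg_mul_sq (2 * π) (half_pos pi_pos)).congr fun k => by
      simp only [f]; ring_nf
  refine ⟨hf.abs, ?_⟩
  have tail : ∀ k ∉ ({-1, 0, 1} : Finset ℤ), f k ≤ 0 := by
    intro k hk
    have hk1 : (1 : ℝ) ≤ (k : ℝ) ^ 2 := by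
      rw [one_le_sq_iff_one_le_abs, ← Int.cast_abs]
      exact_mod_cast Int.one_le_abs (by rintro rfl; simp at hk)
    exact mul_nonpos_of_nonpos_of_nonneg (by nlinarith [pi_gt_three]) (exp_pos _).le
  have hexp : exp (π / 2) * exp (-π / 2) = 1 := by rw [← exp_add]; ring_nf; exact exp_zero
  calc ∑' k, f k ≤ ∑ k ∈ {-1, 0, 1}, f k := hf.tsum_le_sum_of_nonpos _ tail
    _ = 1 - (4 * π - 2) * exp (-π / 2) := by
      rw [Finset.sum_insert (by decide), Finset.sum_pair (by decide)]
      norm_num [f]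
      ring
    _ < 0 := by nlinarith [exp_pi_div_two_lt, exp_pos (-π / 2)]
end

section
/- The series ∑_{k∈ℤ} (−1)^k·(1 − 2πk²)·e^{−πk²/2} converges absolutely and its sum is strictly positive. -/
/-!
Pairing `k` with `-k`, the sum is `1 + 2 T₁ + 2 ∑_{n ≥ 2} T_n` with `T₁ = (2π - 1) e^{-π/2} > 0`.
For `n ≥ 2` the Gaussian factor beats the quadratic one, `|T_n| ≤ 16 e^{-2n}`, so the tail is
dominated by a geometric series of sum `16 e^{-4} / (1 - e^{-2}) < 1/2`.
-/

open Real

noncomputable def altGaussTerm (k : ℤ) : ℝ :=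
  (-1) ^ k * (1 - 2 * π * k ^ 2) * exp (-π * k ^ 2 / 2)

lemma abs_altGaussTerm (k : ℤ) :
    |altGaussTerm k| = |1 - 2 * π * k ^ 2| * exp (-π * k ^ 2 / 2) := by
  rw [altGaussTerm, abs_mul, abs_mul, abs_neg_one_zpow, one_mul, abs_exp]

lemma altGaussTerm_even : Function.Even altGaussTerm := fun k => by
  rw [altGaussTerm, altGaussTerm, zpow_neg, ← inv_zpow, inv_neg_one, Int.cast_neg, neg_sq]

lemma summable_abs_altGaussTerm : Summable fun k => |altGaussTerm k| := by
  -- `(1 + 2π k²) e^{-πk²/2}` is a combination of the Jacobi theta bounds with `S = 0`, `T = 1/2`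
  have hgauss (m : ℕ) := summable_pow_mul_jacobiTheta₂_term_bound 0 one_half_pos m
  refine ((hgauss 0).add ((hgauss 2).mul_left (2 * π))).of_nonneg_of_le (fun _ => abs_nonneg _)
    fun k => ?_
  have hexp : -π * (1 / 2 * k ^ 2 - 2 * 0 * ((|k| : ℤ) : ℝ)) = -π * k ^ 2 / 2 := by ring
  rw [abs_altGaussTerm, hexp, Int.cast_abs, sq_abs, pow_zero, one_mul, ← mul_assoc, ← one_add_mul]
  gcongr
  exact (abs_sub _ _).trans (by rw [abs_one, abs_of_nonneg (by positivity)])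

lemma abs_one_sub_two_pi_mul_sq_mul_exp_le {x : ℝ} (hx : 2 ≤ x) :
    |1 - 2 * π * x ^ 2| * exp (-π * x ^ 2 / 2) ≤ 16 * exp (-2 * x) := by
  have hpoly : |1 - 2 * π * x ^ 2| ≤ 16 * exp x := by
    have := quadratic_le_exp_of_nonneg (by linarith : 0 ≤ x)
    rw [abs_sub_comm, abs_of_nonneg (by nlinarith [pi_gt_three])]
    nlinarith [pi_le_four]
  have hgauss : exp (-π * x ^ 2 / 2) ≤ exp (-3 * x) := by
    gcongr
    nlinarith [pi_gt_three]
  calc |1 - 2 * π * x ^ 2| * exp (-π * x ^ 2 / 2) ≤ 16 * exp x * exp (-3 * x) := by gcongr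
    _ = 16 * exp (-2 * x) := by rw [mul_assoc, ← exp_add]; ring_nf

lemma exp_neg_two_lt : exp (-2) < 1 / 7 := by
  rw [exp_neg, ← one_div, one_div_lt_one_div (exp_pos _) (by norm_num),
    show (2 : ℝ) = 1 + 1 by norm_num, exp_add]
  nlinarith [exp_one_gt_d9]

lemma abs_tsum_altGaussTerm_add_two_lt : |∑' n : ℕ, altGaussTerm (n + 2)| < 1 / 2 := by
  set r := exp (-2)
  have hr0 : 0 ≤ r := (exp_pos _).le
  have hr1 : r < 1 / 7 := exp_neg_two_lt
  have hbound (n : ℕ) : |altGaussTerm (n + 2)| ≤ 16 * r ^ 2 * r ^ n :=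
    calc |altGaussTerm (n + 2)| ≤ 16 * exp (-2 * (n + 2)) := by
          rw [abs_altGaussTerm]
          push_cast
          exact abs_one_sub_two_pi_mul_sq_mul_exp_le (by linarith [n.cast_nonneg (α := ℝ)])
      _ = 16 * r ^ 2 * r ^ n := by
          rw [mul_assoc, ← pow_add, ← exp_nat_mul]
          push_cast
          ring_nf
  have hgeom := (summable_geometric_of_lt_one hr0 (by linarith)).mul_left (16 * r ^ 2)
  have habs := hgeom.of_nonneg_of_le (fun _ => abs_nonneg _) hbound
  calc |∑' n : ℕ, altGaussTerm (n + 2)| ≤ ∑' n : ℕ, |altGaussTerm (n + 2)| :=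
        norm_tsum_le_tsum_norm (f := fun n : ℕ => altGaussTerm (n + 2)) habs
    _ ≤ ∑' n : ℕ, 16 * r ^ 2 * r ^ n := habs.tsum_le_tsum hbound hgeom
    _ = 16 * r ^ 2 / (1 - r) := by
        rw [tsum_mul_left, tsum_geometric_of_lt_one hr0 (by linarith), div_eq_mul_inv]
    _ < 1 / 2 := by
        rw [div_lt_div_iff₀ (by linarith) (by norm_num)]
        nlinarith

lemma altGaussTerm_one_pos : 0 < altGaussTerm 1 := by
  refine mul_pos ?_ (exp_pos _)
  rw [zpow_one, Int.cast_one, one_pow]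
  linarith [pi_gt_three]

lemma tsum_altGaussTerm_eq :
    ∑' k, altGaussTerm k = 1 + 2 * (altGaussTerm 1 + ∑' n : ℕ, altGaussTerm (n + 2)) := by
  have hsummable := summable_abs_altGaussTerm.of_abs
  have hsucc : Summable fun n : ℕ => altGaussTerm (n + 1 : ℕ) :=
    (summable_nat_add_iff 1).mpr (summable_int_iff_summable_nat_and_neg.mp hsummable).1
  rw [tsum_int_eq_zero_add_two_mul_tsum_pnat altGaussTerm_even hsummable,
    tsum_pnat_eq_tsum_succ (f := fun n : ℕ => altGaussTerm n), hsucc.tsum_eq_zero_add]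
  have h0 : altGaussTerm 0 = 1 := by simp [altGaussTerm]
  push_cast [h0, add_assoc, one_add_one_eq_two]
  ring

/-- The series `∑_(k∈ℤ) (−1)^k (1 − 2πk²) e^(−πk²/2)` converges absolutely and its sum is
strictly positive. -/
theorem sum_alt_pos :
    Summable (fun k : ℤ =>
      |(-1 : ℝ) ^ k * (1 - 2 * Real.pi * (k : ℝ) ^ 2) * Real.exp (-Real.pi * (k : ℝ) ^ 2 / 2)|) ∧
    0 < ∑' k : ℤ,
        (-1 : ℝ) ^ k * (1 - 2 * Real.pi * (k : ℝ) ^ 2) * Real.exp (-Real.pi * (k : ℝ) ^ 2 / 2) := by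
  refine ⟨summable_abs_altGaussTerm, ?_⟩
  change 0 < ∑' k, altGaussTerm k
  rw [tsum_altGaussTerm_eq]
  linarith [altGaussTerm_one_pos, (abs_lt.mp abs_tsum_altGaussTerm_add_two_lt).1]
end

section
/- There exists x₀ ∈ (0, 1/2) such that ∑_{k∈ℤ} (8π(k−x₀)² − 1)·e^{−2π(k−x₀)²} = 0. (Equivalently, the Zak transform of the dilated second Hermite function g(t) = (8πt² − 1)e^{−2πt²} vanishes at the point (x₀, 0).) -/
/-!
The sum `F x = ∑ₖ g (k - x)` is continuous because `g` decays faster than any power, so the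
translates converge locally uniformly. At `x = 1/2` every term is positive, since
`8π (k - 1/2)² ≥ 2π > 1`. At `x = 0` the term `g 0 = -1` outweighs all the others, because
`|g t| ≤ 8 e^{-π t²}` makes their sum at most `16 e^{-π} / (1 - e^{-π}) < 1`. The intermediate value
theorem gives a zero of `F` in `(0, 1/2)`.
-/

open Real Filter Asymptotics

section Periodization

variable {E : Type*} [NormedAddCommGroup E] [CompleteSpace E] {f : ℝ → E} {b : ℝ}

theorem summable_continuousMap_comp_addRight_int (hc : Continuous f) (hb : 1 < b)
    (hf : f =O[cocompact ℝ] (|·| ^ (-b))) :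
    Summable fun n : ℤ ↦ (⟨f, hc⟩ : C(ℝ, E)).comp (ContinuousMap.addRight (n : ℝ)) :=
  ContinuousMap.summable_of_locally_summable_norm fun K ↦
    summable_of_isBigO (Real.summable_abs_int_rpow hb)
      ((isBigO_norm_restrict_cocompact ⟨f, hc⟩ (zero_lt_one.trans hb) hf K).comp_tendsto
        Int.tendsto_coe_cofinite)

theorem summable_int_sub_of_isBigO_rpow (hc : Continuous f) (hb : 1 < b)
    (hf : f =O[cocompact ℝ] (|·| ^ (-b))) (x : ℝ) :
    Summable fun k : ℤ ↦ f (k - x) := by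
  simpa [neg_add_eq_sub] using
    ContinuousMap.summable_apply (summable_continuousMap_comp_addRight_int hc hb hf) (-x)

theorem continuous_tsum_int_sub_of_isBigO_rpow (hc : Continuous f) (hb : 1 < b)
    (hf : f =O[cocompact ℝ] (|·| ^ (-b))) :
    Continuous fun x ↦ ∑' k : ℤ, f (k - x) := by
  have hF := summable_continuousMap_comp_addRight_int hc hb hf
  refine ((∑' n : ℤ, (⟨f, hc⟩ : C(ℝ, E)).comp (ContinuousMap.addRight (n : ℝ))).continuous.comp
    continuous_neg).congr fun x ↦ ?_
  simp [← ContinuousMap.tsum_apply hF, neg_add_eq_sub]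

end Periodization

theorem rexp_neg_mul_sq_isLittleO_abs_rpow_cocompact {a : ℝ} (ha : 0 < a) (s : ℝ) :
    (fun x : ℝ ↦ rexp (-a * x ^ 2)) =o[cocompact ℝ] (|·| ^ s) := by
  simpa [Complex.norm_exp, ← Complex.ofReal_pow] using
    (isLittleO_exp_neg_mul_sq_cocompact (a := a) (by simpa using ha) s).norm_left

noncomputable def dilatedHermiteTwo (t : ℝ) : ℝ :=
  (8 * π * t ^ 2 - 1) * rexp (-2 * π * t ^ 2)

theorem continuous_dilatedHermiteTwo : Continuous dilatedHermiteTwo := by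
  unfold dilatedHermiteTwo; fun_prop

theorem dilatedHermiteTwo_neg (t : ℝ) : dilatedHermiteTwo (-t) = dilatedHermiteTwo t := by
  simp [dilatedHermiteTwo]

theorem dilatedHermiteTwo_zero : dilatedHermiteTwo 0 = -1 := by
  simp [dilatedHermiteTwo]

theorem abs_dilatedHermiteTwo_le (t : ℝ) : |dilatedHermiteTwo t| ≤ 8 * rexp (-π * t ^ 2) := by
  have hpi := pi_pos
  have ht := sq_nonneg t
  -- `1 + π t² ≤ exp (π t²)` absorbs the polynomial factor into half of the Gaussian
  have hexp := add_one_le_exp (π * t ^ 2)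
  calc |dilatedHermiteTwo t| = |8 * π * t ^ 2 - 1| * rexp (-2 * π * t ^ 2) := by
        rw [dilatedHermiteTwo, abs_mul, abs_exp]
    _ ≤ 8 * rexp (π * t ^ 2) * rexp (-2 * π * t ^ 2) := by
        gcongr
        rw [abs_le]; constructor <;> nlinarith
    _ = 8 * rexp (-π * t ^ 2) := by
        rw [mul_assoc, ← exp_add]; ring_nf

theorem dilatedHermiteTwo_isBigO : dilatedHermiteTwo =O[cocompact ℝ] (|·| ^ (-2 : ℝ)) := by
  refine IsBigO.trans ?_ (rexp_neg_mul_sq_isLittleO_abs_rpow_cocompact pi_pos _).isBigO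
  refine IsBigO.of_bound 8 (Eventually.of_forall fun t ↦ ?_)
  simpa [abs_exp] using abs_dilatedHermiteTwo_le t

theorem dilatedHermiteTwo_pos_of_le_sq {t : ℝ} (ht : 1 / 4 ≤ t ^ 2) :
    0 < dilatedHermiteTwo t := by
  have hpi := pi_gt_three
  exact mul_pos (by nlinarith) (exp_pos _)

theorem summable_dilatedHermiteTwo_int_sub (x : ℝ) :
    Summable fun k : ℤ ↦ dilatedHermiteTwo (k - x) :=
  summable_int_sub_of_isBigO_rpow continuous_dilatedHermiteTwo one_lt_two
    dilatedHermiteTwo_isBigO x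

theorem continuous_tsum_dilatedHermiteTwo_int_sub :
    Continuous fun x ↦ ∑' k : ℤ, dilatedHermiteTwo (k - x) :=
  continuous_tsum_int_sub_of_isBigO_rpow continuous_dilatedHermiteTwo one_lt_two
    dilatedHermiteTwo_isBigO

theorem one_quarter_le_sq_int_sub_half (k : ℤ) : 1 / 4 ≤ ((k : ℝ) - 1 / 2) ^ 2 := by
  have hk : (0 : ℝ) ≤ k * (k - 1) := by
    have : (0 : ℤ) ≤ k * (k - 1) := by
      rcases le_or_gt k 0 with h | h <;> nlinarith
    exact_mod_cast this
  nlinarith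

theorem exp_neg_pi_lt_one_div_seventeen : rexp (-π) < 1 / 17 := by
  have h3 : (17 : ℝ) < rexp 3 := by
    have h : (2.7182818283 : ℝ) ^ 3 < rexp 1 ^ 3 :=
      pow_lt_pow_left₀ exp_one_gt_d9 (by norm_num) (by norm_num)
    rw [← exp_nat_mul, Nat.cast_ofNat, mul_one] at h
    linarith
  calc rexp (-π) < rexp (-3) := exp_lt_exp.mpr (by linarith [pi_gt_three])
    _ = (rexp 3)⁻¹ := exp_neg 3
    _ < 1 / 17 := by rw [one_div]; exact inv_strictAnti₀ (by norm_num) h3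

theorem tsum_dilatedHermiteTwo_int_sub_half_pos :
    0 < ∑' k : ℤ, dilatedHermiteTwo (k - 1 / 2) :=
  (summable_dilatedHermiteTwo_int_sub _).tsum_pos
    (fun k ↦ (dilatedHermiteTwo_pos_of_le_sq (one_quarter_le_sq_int_sub_half k)).le) 0
    (dilatedHermiteTwo_pos_of_le_sq (one_quarter_le_sq_int_sub_half 0))

theorem tsum_pnat_dilatedHermiteTwo_lt : ∑' n : ℕ+, dilatedHermiteTwo n < 1 / 2 := by
  set r := rexp (-π)
  have hr := exp_neg_pi_lt_one_div_seventeen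
  have hr0 : 0 ≤ r := (exp_pos _).le
  have hgeom : Summable fun n : ℕ ↦ 8 * r ^ n :=
    (summable_geometric_of_lt_one hr0 (by linarith)).mul_left 8
  have hsum : Summable fun k : ℤ ↦ dilatedHermiteTwo k := by
    simpa using summable_dilatedHermiteTwo_int_sub 0
  have hterm (n : ℕ+) : dilatedHermiteTwo n ≤ 8 * r ^ (n : ℕ) := by
    have hn : (n : ℝ) ≤ (n : ℝ) ^ 2 := le_self_pow₀ (Nat.one_le_cast.mpr n.pos) two_ne_zero
    calc dilatedHermiteTwo n ≤ 8 * rexp (-π * (n : ℝ) ^ 2) :=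
          (le_abs_self _).trans (abs_dilatedHermiteTwo_le _)
      _ ≤ 8 * rexp (-π * n) := by
          gcongr 8 * rexp ?_; nlinarith [pi_pos]
      _ = 8 * r ^ (n : ℕ) := by
          rw [← exp_nat_mul]; ring_nf
  calc ∑' n : ℕ+, dilatedHermiteTwo n ≤ ∑' n : ℕ+, 8 * r ^ (n : ℕ) :=
        Summable.tsum_le_tsum hterm
          (hsum.comp_injective (Nat.cast_injective.comp PNat.coe_injective))
          (hgeom.comp_injective PNat.coe_injective)
    _ = 8 * r / (1 - r) := by
        rw [tsum_pnat_eq_tsum_succ (f := fun n ↦ 8 * r ^ n)]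
        simp only [pow_succ, mul_comm _ r, ← mul_assoc]
        rw [tsum_mul_left, tsum_geometric_of_lt_one hr0 (by linarith)]
        ring
    -- `8 r / (1 - r) < 1 / 2` is equivalent to `r < 1 / 17`
    _ < 1 / 2 := by
        rw [div_lt_iff₀ (by linarith)]; linarith

theorem tsum_dilatedHermiteTwo_int_neg : ∑' k : ℤ, dilatedHermiteTwo k < 0 := by
  have hsum : Summable fun k : ℤ ↦ dilatedHermiteTwo k := by
    simpa using summable_dilatedHermiteTwo_int_sub 0
  have heven : Function.Even fun k : ℤ ↦ dilatedHermiteTwo k := fun k ↦ by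
    simpa using dilatedHermiteTwo_neg k
  rw [tsum_int_eq_zero_add_two_mul_tsum_pnat heven hsum, Int.cast_zero, dilatedHermiteTwo_zero,
    nsmul_eq_mul]
  simp only [Int.cast_natCast, Nat.cast_ofNat]
  linarith [tsum_pnat_dilatedHermiteTwo_lt]

/-- There exists `x₀ ∈ (0, 1/2)` with `∑_(k∈ℤ) (8π(k−x₀)² − 1) e^(−2π(k−x₀)²) = 0`, i.e. the
Zak transform of the dilated second Hermite function `g(t) = (8πt² − 1)e^(−2πt²)` vanishes at
`(x₀, 0)`. -/
theorem exists_zero_of_zak_dilated_h2 :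
    ∃ x₀ ∈ Set.Ioo (0 : ℝ) (1 / 2),
      ∑' k : ℤ, (8 * Real.pi * ((k : ℝ) - x₀) ^ 2 - 1) *
        Real.exp (-2 * Real.pi * ((k : ℝ) - x₀) ^ 2) = 0 := by
  have hsign : (0 : ℝ) ∈ Set.Ioo (∑' k : ℤ, dilatedHermiteTwo (k - 0))
      (∑' k : ℤ, dilatedHermiteTwo (k - 1 / 2)) := by
    simpa only [sub_zero] using ⟨tsum_dilatedHermiteTwo_int_neg,
      tsum_dilatedHermiteTwo_int_sub_half_pos⟩
  exact intermediate_value_Ioo (by norm_num)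
    continuous_tsum_dilatedHermiteTwo_int_sub.continuousOn hsign
end
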